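/- Let q ∈ ℂ with q ≠ 0, and let N ≥ 3. The XXZ Temperley–Lieb densities e_i (1 ≤ i ≤ N−1) satisfy: (i) e_i² = (q + q^{−1}) e_i; (ii) e_i e_{i+1} e_i = e_i and e_{i+1} e_i e_{i+1} = e_{i+1} for 1 ≤ i ≤ N−2; (iii) e_i e_j = e_j e_i for |i−j| > 1; (iv) H(q) = −Σ_{i=1}^{N−1} e_i + (N−1)((q+q^{−1})/4)·Id; and (v) each e_i commutes with E_N, F_N and K_N. -/

import Mathlib

/-!
Every operator in the statement is a linear combination of tensor products `piKron A` of one-site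
matrices, and `e_i` is the image of one fixed two-site operator under the algebra embedding
`embed` of the sites `i, i + 1` into the chain. The relations among the `e_i` therefore reduce to
identities on two or three sites, where `e = |u⟩⟨v|` has rank one, with `u = q |↑↓⟩ - |↓↑⟩`,
`v = ⟨↑↓| - q⁻¹ ⟨↓↑|` and `⟨v|u⟩ = q + q⁻¹`.

`E_N` and `F_N` are sums of strings `a ⊗ ⋯ ⊗ a ⊗ b ⊗ c ⊗ ⋯ ⊗ c`. On the sites `i, i + 1` such a
string is `a ⊗ a` or `c ⊗ c`, except for the two strings with `b` there, whose sum is the two-site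
coproduct `E ⊗ K + 1 ⊗ E` (resp. `F ⊗ 1 + K⁻¹ ⊗ F`). All of these commute with `e`: a diagonal
`D ⊗ D` is scalar on the span of `|↑↓⟩, |↓↑⟩`, and the coproducts annihilate `u` and `v`.
-/

open Matrix Complex BigOperators Finset

noncomputable section

namespace LatticeW

/-- basis states of the chain of `N` spin-1/2 sites -/
abbrev St (N : ℕ) := Fin N → Fin 2
/-- operators on `ℂ^{2^N}` -/
abbrev Op (N : ℕ) := Matrix (St N) (St N) ℂ

def σx : Matrix (Fin 2) (Fin 2) ℂ := !![0, 1; 1, 0]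
def σy : Matrix (Fin 2) (Fin 2) ℂ := !![0, -Complex.I; Complex.I, 0]
def σz : Matrix (Fin 2) (Fin 2) ℂ := !![1, 0; 0, -1]
def σp : Matrix (Fin 2) (Fin 2) ℂ := (1/2 : ℂ) • (σx + Complex.I • σy)
def σm : Matrix (Fin 2) (Fin 2) ℂ := (1/2 : ℂ) • (σx - Complex.I • σy)

/-- the operator acting as `M` on the (0-indexed) site `j` and as the identity
elsewhere; junk value `0` if `j` is out of range. -/
def site (N : ℕ) (j : ℕ) (M : Matrix (Fin 2) (Fin 2) ℂ) : Op N :=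
  if h : j < N then
    (fun v w => if ∀ l, l ≠ (⟨j, h⟩ : Fin N) → v l = w l then M (v ⟨j, h⟩) (w ⟨j, h⟩) else 0)
  else 0

/-- diagonal value of σ^z on a one-site basis state -/
def zval (t : Fin 2) : ℂ := if t = 0 then 1 else -1

/-- Jordan–Wigner creation operator `c_j†` (0-indexed `j`; paper index `j+1`):
`c_j† = i^{j} (∏_{l<j} i σ^z_l) σ^+_j`. -/
def ad (N : ℕ) (j : ℕ) : Op N :=
  Complex.I ^ j •
    (Matrix.diagonal (fun v : St N =>
        ∏ l ∈ Finset.univ.filter (fun l : Fin N => (l : ℕ) < j), (Complex.I * zval (v l)))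
      * site N j σp)

/-- Jordan–Wigner annihilation operator `c_j` (0-indexed `j`):
`c_j = i^{-j} (∏_{l<j} (i σ^z_l)⁻¹) σ^-_j`. -/
def an (N : ℕ) (j : ℕ) : Op N :=
  (Complex.I ^ j)⁻¹ •
    (Matrix.diagonal (fun v : St N =>
        ∏ l ∈ Finset.univ.filter (fun l : Fin N => (l : ℕ) < j), (Complex.I * zval (v l))⁻¹)
      * site N j σm)

/-- Temperley–Lieb density `e_{j+1}` of the paper (0-indexed `j`). -/
def eTL (N : ℕ) (j : ℕ) : Op N :=
  an N j * ad N (j+1) + an N (j+1) * ad N j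
    + Complex.I • (ad N j * an N j - ad N (j+1) * an N (j+1))

/-- the XX Hamiltonian `H = -∑ e_j`. -/
def Hop (N : ℕ) : Op N := -∑ j ∈ Finset.range (N - 1), eTL N j

/-- `ρ(K) = ⊗_j (i σ^z)`. -/
def Kop (N : ℕ) : Op N := Matrix.diagonal (fun v : St N => ∏ l, (Complex.I * zval (v l)))

/-- `ρ(E) = (∑_{j=1}^N i^j c_j†) ρ(K)` (paper indices). -/
def Eop (N : ℕ) : Op N := (∑ j ∈ Finset.range N, Complex.I ^ (j+1) • ad N j) * Kop N

/-- `ρ(F) = ∑_{j=1}^N i^{j-1} c_j` (paper indices). -/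
def Fop (N : ℕ) : Op N := ∑ j ∈ Finset.range N, Complex.I ^ j • an N j

/-- divided power `ρ(e) = ∑_{j1<j2} (-1)^{j1+j2} i^{1-j1-j2} c_{j1}† c_{j2}†` (paper indices). -/
def sl2e (N : ℕ) : Op N :=
  ∑ j2 ∈ Finset.range N, ∑ j1 ∈ Finset.range j2,
    ((-1 : ℂ) ^ (j1 + j2) * (Complex.I ^ (j1 + j2 + 1))⁻¹) • (ad N j1 * ad N j2)

/-- divided power `ρ(f) = ∑_{j1<j2} i^{j1+j2-1} c_{j1} c_{j2}` (paper indices). -/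
def sl2f (N : ℕ) : Op N :=
  ∑ j2 ∈ Finset.range N, ∑ j1 ∈ Finset.range j2,
    (Complex.I ^ (j1 + j2 + 1)) • (an N j1 * an N j2)

/-- `WB^+_{j+1}` of the paper (0-indexed `j`). -/
def WBp (N : ℕ) (j : ℕ) : Op N :=
  (-1 : ℂ) ^ (j+1) •
    (ad N j * ad N (j+1) + Complex.I • (ad N j * ad N (j+2)) - ad N (j+1) * ad N (j+2))

/-- `WB^0_{j+1}` of the paper (0-indexed `j`). -/
def WB0 (N : ℕ) (j : ℕ) : Op N :=
  (-(1/2) : ℂ) •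
    ((1 : Op N) + Complex.I • (ad N j * an N (j+1)) - ad N j * an N (j+2)
      + Complex.I • (ad N (j+1) * an N j) - (2 : ℂ) • (ad N (j+1) * an N (j+1))
      - Complex.I • (ad N (j+1) * an N (j+2)) - ad N (j+2) * an N j
      - Complex.I • (ad N (j+2) * an N (j+1)))

/-- `WB^-_{j+1}` of the paper (0-indexed `j`). -/
def WBm (N : ℕ) (j : ℕ) : Op N :=
  (-1 : ℂ) ^ j •
    (an N j * an N (j+1) + Complex.I • (an N j * an N (j+2)) - an N (j+1) * an N (j+2))

/-- `WB^α_j` with `α = 0 ↦ +`, `α = 1 ↦ 0`, `α = 2 ↦ -`. -/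
def WB (N : ℕ) (α : Fin 3) (j : ℕ) : Op N :=
  match α with
  | 0 => WBp N j
  | 1 => WB0 N j
  | 2 => WBm N j

/-- the Fourier amplitudes `A_k(j)` (both `k` and `j` paper-indexed). -/
def Afun (N k j : ℕ) : ℂ :=
  (1/2 : ℂ) * (1 + Complex.I * Complex.exp (-(Complex.I * (Real.pi : ℂ) * (k : ℂ) / (N : ℂ))))
      * Complex.exp (Complex.I * (Real.pi : ℂ) * (k : ℂ) * (j : ℂ) / (N : ℂ))
  - (1/2 : ℂ) * (1 + Complex.I * Complex.exp (Complex.I * (Real.pi : ℂ) * (k : ℂ) / (N : ℂ)))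
      * Complex.exp (-(Complex.I * (Real.pi : ℂ) * (k : ℂ) * (j : ℂ) / (N : ℂ)))

/-- `θ†_k = ∑_{j=1}^N A_k(j) c_j†` (paper indices). -/
def θd (N k : ℕ) : Op N := ∑ j ∈ Finset.range N, Afun N k (j+1) • ad N j

/-- `θ_k = -i ∑_{j=1}^N A_k(j) c_j` (paper indices). -/
def θa (N k : ℕ) : Op N := (-Complex.I) • ∑ j ∈ Finset.range N, Afun N k (j+1) • an N j

/-- the normalization `sqrt(n/(N sin(πn/N)))` for `n ≠ 0`, and `1/√π` for `n = 0`. -/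
def ηcoef (N : ℕ) (n : ℤ) : ℂ :=
  if n = 0 then ((Real.sqrt Real.pi)⁻¹ : ℝ)
  else ((Real.sqrt ((n : ℝ) / ((N : ℝ) * Real.sin (Real.pi * (n : ℝ) / (N : ℝ)))) : ℝ) : ℂ)

/-- `η^+_n` -/
def ηp (N : ℕ) (n : ℤ) : Op N := ηcoef N n • θd N ((N : ℤ)/2 + n).toNat

/-- `η^-_n` -/
def ηm (N : ℕ) (n : ℤ) : Op N := ηcoef N n • θa N ((N : ℤ)/2 - n).toNat

/-- coefficient `(N/2 - j + (1-(-1)^j)/2) i^j` (paper index `j`). -/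
def γcoef (N j : ℕ) : ℂ :=
  ((N : ℂ)/2 - (j : ℂ) + (1 - (-1 : ℂ)^j)/2) * Complex.I ^ j

/-- the root vector `γ^+`. -/
def γp (N : ℕ) : Op N :=
  (Complex.I * (Real.sqrt Real.pi : ℂ) / (N : ℂ)) •
    ∑ j ∈ Finset.range N, γcoef N (j+1) • ad N j

/-- the root vector `γ^-`. -/
def γm (N : ℕ) : Op N :=
  (-((Real.sqrt Real.pi : ℂ) / (N : ℂ))) •
    ∑ j ∈ Finset.range N, γcoef N (j+1) • an N j

/-- Kronecker delta -/
def kδ (a b : ℤ) : ℂ := if a = b then 1 else 0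

/-- `s(j) = sqrt(sin(πj/N)/j)` with the convention `π/N` at `j = 0`. -/
def sfun (N : ℕ) (j : ℤ) : ℂ :=
  if j = 0 then ((Real.sqrt (Real.pi / (N : ℝ)) : ℝ) : ℂ)
  else ((Real.sqrt (Real.sin (Real.pi * (j : ℝ) / (N : ℝ)) / (j : ℝ)) : ℝ) : ℂ)

/-- the index range `-N/2+1 ≤ j ≤ N/2-1`. -/
def modeRange (N : ℕ) : Finset ℤ := Finset.Icc (-(N : ℤ)/2 + 1) ((N : ℤ)/2 - 1)

/-- the coefficient appearing in `Ĥ^r_n`. -/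
def Hcoef (N : ℕ) (r : ℕ) (n j1 j2 : ℤ) : ℂ :=
  ((Real.cos (Real.pi * ((j1 - j2 : ℤ) : ℝ) / (2 * (N : ℝ))) : ℝ) : ℂ)^r *
      ((-1 : ℂ)^r * kδ (j1 + j2) n + kδ (j1 + j2) (-n))
    - ((Real.sin (Real.pi * ((j1 + j2 : ℤ) : ℝ) / (2 * (N : ℝ))) : ℝ) : ℂ)^r *
      (kδ (j1 - j2) ((N : ℤ) + n) + kδ (j1 - j2) (-(N : ℤ) - n)
        + (-1 : ℂ)^r * kδ (j1 - j2) ((N : ℤ) - n) + (-1 : ℂ)^r * kδ (j1 - j2) (-(N : ℤ) + n))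

/-- the lattice Virasoro mode `Ĥ^r_n`. -/
def Hhat (N : ℕ) (r : ℕ) (n : ℤ) : Op N :=
  ∑ j1 ∈ modeRange N, ∑ j2 ∈ modeRange N,
    (sfun N j1 * sfun N j2 * Hcoef N r n j1 j2) • (ηp N j1 * ηm N j2)

/-- the coefficient `U_{r,n}(j1,j2)`. -/
def Ucoef (N : ℕ) (r : ℕ) (n j1 j2 : ℤ) : ℂ :=
  ((Real.sin (Real.pi * ((j1 - j2 : ℤ) : ℝ) / (2 * (N : ℝ))) : ℝ) : ℂ)
      * ((Real.cos (Real.pi * ((j1 - j2 : ℤ) : ℝ) / (2 * (N : ℝ))) : ℝ) : ℂ)^r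
      * ((-1 : ℂ)^r * kδ (j1 + j2) n + kδ (j1 + j2) (-n))
    + 2 * ((Real.cos (Real.pi * ((j1 + j2 : ℤ) : ℝ) / (2 * (N : ℝ))) : ℝ) : ℂ)
      * ((Real.sin (Real.pi * ((j1 + j2 : ℤ) : ℝ) / (2 * (N : ℝ))) : ℝ) : ℂ)^r
      * (kδ (j1 - j2) (-(N : ℤ) - n) + (-1 : ℂ)^r * kδ (j1 - j2) (-(N : ℤ) + n))

/-- the lattice W-algebra mode `Ŵ^{α,r}_n` with `α = 0 ↦ +`, `α = 1 ↦ 0`, `α = 2 ↦ -`. -/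
def What (N : ℕ) (α : Fin 3) (r : ℕ) (n : ℤ) : Op N :=
  ∑ j1 ∈ modeRange N, ∑ j2 ∈ modeRange N,
    (sfun N j1 * sfun N j2 * Ucoef N r n j1 j2) •
      (match α with
        | 0 => ηp N j1 * ηp N j2
        | 1 => ηp N j1 * ηm N j2 + ηm N j1 * ηp N j2
        | 2 => ηm N j1 * ηm N j2)

/-- the all-spins-down reference state. -/
def downSt (N : ℕ) : St N → ℂ := fun v => if ∀ j, v j = 1 then 1 else 0

/-- the vacuum `|0⟩ = θ†_{N/2} θ†_{N/2+1} ⋯ θ†_{N-1} |↓…↓⟩`. -/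
def vac (N : ℕ) : St N → ℂ :=
  (((List.range (N/2)).map (fun t => θd N (N/2 + t))).prod).mulVec (downSt N)

/-- the logarithmic partner `|0̃⟩ = γ^+ θ†_{N/2+1} ⋯ θ†_{N-1} |↓…↓⟩`. -/
def vacTilde (N : ℕ) : St N → ℂ :=
  (γp N * (((List.range (N/2 - 1)).map (fun t => θd N (N/2 + 1 + t))).prod)).mulVec (downSt N)

/-- the total spin `S^z = ½ ∑_j σ^z_j`. -/
def Sz (N : ℕ) : Op N := (1/2 : ℂ) • ∑ j ∈ Finset.range N, site N j σz

/- ************ XXZ spin-chain at generic q (statement 19) ************ -/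

/-- the single-site diagonal `diag(q, q⁻¹)` evaluated on a basis state. -/
def dq (q : ℂ) : Fin 2 → ℂ := fun t => if t = 0 then q else q⁻¹

/-- the XXZ Temperley–Lieb density `e_{i+1}` of the paper (0-indexed `i`). -/
def eXXZ (N : ℕ) (q : ℂ) (i : ℕ) : Op N :=
  ((q + q⁻¹)/4) • (1 : Op N)
    - (1/2 : ℂ) • (site N i σx * site N (i+1) σx + site N i σy * site N (i+1) σy)
    - ((q + q⁻¹)/4) • (site N i σz * site N (i+1) σz)
    + ((q - q⁻¹)/4) • (site N i σz - site N (i+1) σz)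

/-- the XXZ Hamiltonian with quantum-group symmetric boundary terms. -/
def HXXZ (N : ℕ) (q : ℂ) : Op N :=
  (1/2 : ℂ) • ∑ i ∈ Finset.range (N - 1),
      (site N i σx * site N (i+1) σx + site N i σy * site N (i+1) σy
        + ((q + q⁻¹)/2) • (site N i σz * site N (i+1) σz))
    - ((q - q⁻¹)/4) • (site N 0 σz - site N (N-1) σz)

/-- `K_N = ⊗_j diag(q,q⁻¹)`. -/
def KXXZ (N : ℕ) (q : ℂ) : Op N := Matrix.diagonal (fun v : St N => ∏ l, dq q (v l))

/-- `E_N = ∑_j σ^+_j ⊗ ∏_{l>j} diag(q,q⁻¹)_l`. -/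
def EXXZ (N : ℕ) (q : ℂ) : Op N :=
  ∑ j ∈ Finset.range N,
    site N j σp *
      Matrix.diagonal (fun v : St N =>
        ∏ l ∈ Finset.univ.filter (fun l : Fin N => j < (l : ℕ)), dq q (v l))

/-- `F_N = ∑_j (∏_{l<j} diag(q⁻¹,q)_l) ⊗ σ^-_j`. -/
def FXXZ (N : ℕ) (q : ℂ) : Op N :=
  ∑ j ∈ Finset.range N,
    Matrix.diagonal (fun v : St N =>
        ∏ l ∈ Finset.univ.filter (fun l : Fin N => (l : ℕ) < j), (dq q (v l))⁻¹) *
      site N j σm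

open scoped Kronecker

section TensorProducts

variable {ι Λ σ R : Type*} [CommSemiring R]

def piKron [Fintype Λ] (A : Λ → Matrix σ σ R) : Matrix (Λ → σ) (Λ → σ) R :=
  of fun v w => ∏ l, A l (v l) (w l)

theorem piKron_one [Fintype Λ] [DecidableEq σ] : piKron (1 : Λ → Matrix σ σ R) = 1 := by
  ext v w
  simp [piKron, one_apply, Fintype.prod_boole, funext_iff]

theorem piKron_diagonal [Fintype Λ] [DecidableEq σ] (d : Λ → σ → R) :
    piKron (fun l => diagonal (d l)) = diagonal fun v => ∏ l, d l (v l) := by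
  ext v w
  simp [piKron, diagonal_apply, Fintype.prod_ite_zero, funext_iff]

theorem diagonal_prod_filter_eq_piKron [Fintype Λ] [DecidableEq σ] (p : Λ → Prop)
    [DecidablePred p] (d : σ → R) :
    diagonal (fun v : Λ → σ => ∏ l ∈ Finset.univ.filter p, d (v l))
      = piKron fun l => if p l then diagonal d else 1 := by
  have hdiag : (fun l => if p l then diagonal d else 1)
      = fun l => diagonal (if p l then d else 1) :=
    funext fun l => by split_ifs <;> simp
  rw [hdiag, piKron_diagonal]
  congr 1
  funext v
  rw [Finset.prod_filter]
  exact Finset.prod_congr rfl fun l _ => by split_ifs <;> rfl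

theorem single_one_eq_piKron [Fintype Λ] [DecidableEq σ] (x y : Λ → σ) :
    single x y (1 : R) = piKron fun l => single (x l) (y l) 1 := by
  ext v w
  simp [piKron, single_apply, Fintype.prod_boole, funext_iff, forall_and]

theorem piKron_apply_of_eq_one [Fintype Λ] [DecidableEq Λ] [DecidableEq σ]
    {A : Λ → Matrix σ σ R} (S : Finset Λ) (hA : ∀ l ∉ S, A l = 1) (v w : Λ → σ) :
    piKron A v w = (if ∀ l ∉ S, v l = w l then 1 else 0) * ∏ l ∈ S, A l (v l) (w l) := by
  have hrest : ∏ l ∈ Sᶜ, A l (v l) (w l) = if ∀ l ∉ S, v l = w l then 1 else 0 := by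
    simp only [← Finset.mem_compl]
    calc ∏ l ∈ Sᶜ, A l (v l) (w l) = ∏ l ∈ Sᶜ, if v l = w l then (1 : R) else 0 :=
          Finset.prod_congr rfl fun l hl => by rw [hA l (Finset.mem_compl.1 hl), one_apply]
      _ = _ := by simp [Finset.prod_boole]
  rw [piKron, of_apply, ← Finset.prod_mul_prod_compl S, mul_comm, hrest]

theorem piKron_mulSingle_apply [Fintype Λ] [DecidableEq Λ] [DecidableEq σ] (a : Λ)
    (A : Matrix σ σ R) (v w : Λ → σ) :
    piKron (Pi.mulSingle (M := fun _ => Matrix σ σ R) a A) v w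
      = if ∀ l, l ≠ a → v l = w l then A (v a) (w a) else 0 := by
  rw [piKron_apply_of_eq_one {a} fun l hl => Pi.mulSingle_eq_of_ne (by simpa using hl) _]
  simp

def windowEquiv [Fintype ι] [DecidableEq Λ] (e : ι ↪ Λ) :
    (Λ → σ) ≃ (ι → σ) × ({l // l ∉ Set.range e} → σ) :=
  (Equiv.piEquivPiSubtypeProd (· ∈ Set.range e) fun _ => σ).trans
    ((Equiv.arrowCongr (Equiv.ofInjective e e.injective).symm (Equiv.refl σ)).prodCongr
      (Equiv.refl _))

theorem windowEquiv_apply [Fintype ι] [DecidableEq Λ] (e : ι ↪ Λ) (v : Λ → σ) :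
    windowEquiv e v = (v ∘ e, fun l : {l // l ∉ Set.range e} => v l) := rfl

variable [Fintype σ]

theorem piKron_mul [Fintype Λ] [DecidableEq Λ] (A B : Λ → Matrix σ σ R) :
    piKron A * piKron B = piKron (A * B) := by
  ext v w
  simp only [piKron, mul_apply, of_apply, Pi.mul_apply, Fintype.prod_sum,
    ← Finset.prod_mul_distrib]

theorem commute_piKron [Fintype Λ] [DecidableEq Λ] {A B : Λ → Matrix σ σ R}
    (h : ∀ l, Commute (A l) (B l)) : Commute (piKron A) (piKron B) := by
  change piKron A * piKron B = piKron B * piKron A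
  rw [piKron_mul, piKron_mul]
  exact congrArg _ (funext fun l => (h l).eq)

theorem piKron_mulSingle_mul_mulSingle_apply [Fintype Λ] [DecidableEq Λ] [DecidableEq σ]
    {a b : Λ} (hab : a ≠ b) (A B : Matrix σ σ R) (v w : Λ → σ) :
    piKron (Pi.mulSingle a A * Pi.mulSingle b B) v w
      = (if ∀ l ∉ ({a, b} : Finset Λ), v l = w l then 1 else 0)
        * (A (v a) (w a) * B (v b) (w b)) := by
  rw [piKron_apply_of_eq_one {a, b}, Finset.prod_pair hab]
  · simp [hab, hab.symm]
  · intro l hl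
    simp only [Finset.mem_insert, Finset.mem_singleton, not_or] at hl
    simp [Pi.mulSingle_eq_of_ne hl.1, Pi.mulSingle_eq_of_ne hl.2]

variable [Fintype ι] [DecidableEq ι] [Fintype Λ] [DecidableEq Λ] [DecidableEq σ]

variable (R) in
def embed (e : ι ↪ Λ) : Matrix (ι → σ) (ι → σ) R →ₐ[R] Matrix (Λ → σ) (Λ → σ) R where
  toFun M := (M ⊗ₖ (1 : Matrix ({l // l ∉ Set.range e} → σ) _ R)).submatrix
    (windowEquiv e) (windowEquiv e)
  map_one' := by simp
  map_mul' M M' := by rw [submatrix_mul_equiv, ← mul_kronecker_mul, one_mul]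
  map_zero' := by simp
  map_add' M M' := by simp [add_kronecker, submatrix_add]
  commutes' r := by simp [Algebra.algebraMap_eq_smul_one, smul_kronecker, submatrix_smul]

theorem embed_piKron (e : ι ↪ Λ) (A : ι → Matrix σ σ R) :
    embed R e (piKron A) = piKron (Function.extend e A 1) := by
  ext v w
  have hwin : ∏ k, A k (v (e k)) (w (e k))
      = ∏ l : Set.range e, Function.extend e A 1 l (v l) (w l) := by
    rw [← (Equiv.ofInjective e e.injective).prod_comp]
    simp [e.injective.extend_apply]
  have hrest : (1 : Matrix ({l // l ∉ Set.range e} → σ) ({l // l ∉ Set.range e} → σ) R)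
        (fun l => v l) (fun l => w l)
      = ∏ l : {l // l ∉ Set.range e}, Function.extend e A 1 l (v l) (w l) := by
    rw [← piKron_one]
    refine Finset.prod_congr rfl fun l _ => ?_
    rw [Function.extend_apply' _ _ _ (by simpa using l.2)]
    rfl
  simp only [embed, AlgHom.coe_mk, RingHom.coe_mk, MonoidHom.coe_mk, OneHom.coe_mk,
    submatrix_apply, windowEquiv_apply, kronecker_apply, hrest]
  simp only [piKron, of_apply, Function.comp_apply, hwin]
  convert Fintype.prod_subtype_mul_prod_subtype (· ∈ Set.range e)
    fun l => Function.extend e A 1 l (v l) (w l)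

theorem commute_embed_piKron_extend_one (e : ι ↪ Λ) (M : Matrix (ι → σ) (ι → σ) R)
    (B : Λ → Matrix σ σ R) :
    Commute (embed R e M) (piKron (Function.extend e (1 : ι → Matrix σ σ R) B)) := by
  -- `embed R e` maps matrix units to tensor products that are `1` off the window
  induction M using Matrix.induction_on' with
  | h_zero => simp
  | h_add M M' hM hM' => rw [map_add]; exact hM.add_left hM'
  | h_std_basis x y c =>
    rw [← mul_one c, ← smul_eq_mul, ← smul_single, map_smul, single_one_eq_piKron, embed_piKron]
    refine (commute_piKron fun l => ?_).smul_left c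
    by_cases hl : ∃ k, e k = l
    · obtain ⟨k, rfl⟩ := hl
      simp only [e.injective.extend_apply, Pi.one_apply]
      exact Commute.one_right _
    · simp only [Function.extend_apply' _ _ _ hl, Pi.one_apply]
      exact Commute.one_left _

theorem piKron_eq_embed_mul (e : ι ↪ Λ) (B : Λ → Matrix σ σ R) :
    piKron B
      = embed R e (piKron (B ∘ e)) * piKron (Function.extend e (1 : ι → Matrix σ σ R) B) := by
  rw [embed_piKron, piKron_mul]
  congr 1
  funext l
  by_cases hl : ∃ k, e k = l
  · obtain ⟨k, rfl⟩ := hl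
    simp [e.injective.extend_apply]
  · simp [Function.extend_apply' _ _ _ hl]

theorem commute_embed_piKron (e : ι ↪ Λ) {M : Matrix (ι → σ) (ι → σ) R}
    {B : Λ → Matrix σ σ R} (h : Commute M (piKron (B ∘ e))) :
    Commute (embed R e M) (piKron B) := by
  rw [piKron_eq_embed_mul e B]
  exact (h.map (embed R e)).mul_right (commute_embed_piKron_extend_one e M B)

theorem commute_embed_piKron_add (e : ι ↪ Λ) {M : Matrix (ι → σ) (ι → σ) R}
    {B B' : Λ → Matrix σ σ R} (hBB' : ∀ l ∉ Set.range e, B l = B' l)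
    (h : Commute M (piKron (B ∘ e) + piKron (B' ∘ e))) :
    Commute (embed R e M) (piKron B + piKron B') := by
  have hrest : Function.extend e (1 : ι → Matrix σ σ R) B
      = Function.extend e (1 : ι → Matrix σ σ R) B' := by
    funext l
    by_cases hl : ∃ k, e k = l
    · obtain ⟨k, rfl⟩ := hl
      simp [e.injective.extend_apply]
    · rw [Function.extend_apply' _ _ _ hl, Function.extend_apply' _ _ _ hl]
      exact hBB' l (by simpa using hl)
  rw [piKron_eq_embed_mul e B, piKron_eq_embed_mul e B', hrest, ← add_mul, ← map_add]
  exact (h.map (embed R e)).mul_right (commute_embed_piKron_extend_one e M B')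

end TensorProducts

theorem extend_mulSingle {α β M : Type*} [DecidableEq α] [DecidableEq β] [One M] {f : α → β}
    (hf : Function.Injective f) (a : α) (x : M) :
    Function.extend f (Pi.mulSingle a x) 1 = Pi.mulSingle (f a) x := by
  funext b
  by_cases hb : ∃ a', f a' = b
  · obtain ⟨a', rfl⟩ := hb
    simp [hf.extend_apply, Pi.mulSingle_apply, hf.eq_iff]
  · rw [Function.extend_apply' _ _ _ hb, Pi.mulSingle_eq_of_ne, Pi.one_apply]
    rintro rfl
    exact hb ⟨a, rfl⟩

section TemperleyLieb

/-- `P A B` stands for the operator `A ⊗ B` on the two sites the density acts on. -/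
def tlDensity {M : Type*} [Ring M] [Algebra ℂ M] (q : ℂ)
    (P : Matrix (Fin 2) (Fin 2) ℂ → Matrix (Fin 2) (Fin 2) ℂ → M) : M :=
  ((q + q⁻¹)/4) • 1 - (1/2 : ℂ) • (P σx σx + P σy σy) - ((q + q⁻¹)/4) • P σz σz
    + ((q - q⁻¹)/4) • (P σz 1 - P 1 σz)

theorem map_tlDensity {M M' : Type*} [Ring M] [Algebra ℂ M] [Ring M'] [Algebra ℂ M']
    (f : M →ₐ[ℂ] M') (q : ℂ) (P : Matrix (Fin 2) (Fin 2) ℂ → Matrix (Fin 2) (Fin 2) ℂ → M) :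
    f (tlDensity q P) = tlDensity q fun A B => f (P A B) := by
  simp [tlDensity]

theorem commute_tlDensity_right {M : Type*} [Ring M] [Algebra ℂ M] {x : M} (q : ℂ)
    {P : Matrix (Fin 2) (Fin 2) ℂ → Matrix (Fin 2) (Fin 2) ℂ → M}
    (h : ∀ A B, Commute x (P A B)) : Commute x (tlDensity q P) :=
  ((((Commute.one_right x).smul_right _).sub_right
    (((h _ _).add_right (h _ _)).smul_right _)).sub_right ((h _ _).smul_right _)).add_right
    (((h _ _).sub_right (h _ _)).smul_right _)

variable {Λ : Type*} [Fintype Λ] [DecidableEq Λ]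

def tlDensityAt (a b : Λ) (q : ℂ) : Matrix (Λ → Fin 2) (Λ → Fin 2) ℂ :=
  tlDensity q fun A B => piKron (Pi.mulSingle a A * Pi.mulSingle b B)

theorem embed_tlDensityAt {ι : Type*} [Fintype ι] [DecidableEq ι] (e : ι ↪ Λ) (a b : ι)
    (q : ℂ) : embed ℂ e (tlDensityAt a b q) = tlDensityAt (e a) (e b) q := by
  rw [tlDensityAt, map_tlDensity]
  congr
  funext A B
  have hext := Function.extend_mul e (Pi.mulSingle a A) (Pi.mulSingle b B)
    (1 : Λ → Matrix (Fin 2) (Fin 2) ℂ) 1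
  rw [mul_one] at hext
  rw [embed_piKron, hext, extend_mulSingle e.injective, extend_mulSingle e.injective]

theorem commute_tlDensityAt {a b c d : Λ} (hc : c ≠ a ∧ c ≠ b) (hd : d ≠ a ∧ d ≠ b) (q : ℂ) :
    Commute (tlDensityAt a b q) (tlDensityAt c d q) := by
  refine commute_tlDensity_right q fun C D => (commute_tlDensity_right q fun A B => ?_).symm
  refine commute_piKron fun l => ?_
  by_cases hl : l = c ∨ l = d
  · have hla : l ≠ a := by rintro rfl; tauto
    have hlb : l ≠ b := by rintro rfl; tauto
    simp [Pi.mulSingle_eq_of_ne hla, Pi.mulSingle_eq_of_ne hlb]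
  · rw [not_or] at hl
    simp [Pi.mulSingle_eq_of_ne hl.1, Pi.mulSingle_eq_of_ne hl.2]

/-- The components of `u = q |↑↓⟩ - |↓↑⟩`, where index `0` is spin up. -/
def singletKet (q : ℂ) : Fin 2 → Fin 2 → ℂ := ![![0, q], ![-1, 0]]

/-- The components of `v = ⟨↑↓| - q⁻¹ ⟨↓↑|`. -/
def singletBra (q : ℂ) : Fin 2 → Fin 2 → ℂ := ![![0, 1], ![-q⁻¹, 0]]

theorem tlDensityAt_apply {a b : Λ} (hab : a ≠ b) {q : ℂ} (hq : q ≠ 0) (v w : Λ → Fin 2) :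
    tlDensityAt a b q v w = (if ∀ l ∉ ({a, b} : Finset Λ), v l = w l then 1 else 0)
      * (singletKet q (v a) (v b) * singletBra q (w a) (w b)) := by
  have hone : (1 : Matrix (Λ → Fin 2) (Λ → Fin 2) ℂ)
      = piKron (Pi.mulSingle a 1 * Pi.mulSingle b 1) := by
    simp [piKron_one]
  rw [tlDensityAt, tlDensity, hone]
  simp only [Matrix.add_apply, Matrix.sub_apply, Matrix.smul_apply, smul_eq_mul,
    piKron_mulSingle_mul_mulSingle_apply hab]
  generalize (if ∀ l ∉ ({a, b} : Finset Λ), v l = w l then (1 : ℂ) else 0) = c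
  generalize v a = s, v b = t, w a = s', w b = t'
  fin_cases s <;> fin_cases t <;> fin_cases s' <;> fin_cases t' <;>
    simp [σx, σy, σz, singletKet, singletBra] <;> field_simp <;> ring_nf

end TemperleyLieb

section SmallChains

theorem sum_fun_fin_succ {n : ℕ} {α M : Type*} [Fintype α] [AddCommMonoid M]
    (f : (Fin (n + 1) → α) → M) : ∑ x, f x = ∑ a, ∑ x, f (vecCons a x) := by
  rw [← (Fin.consEquiv fun _ => α).sum_comp, Fintype.sum_prod_type]
  rfl

theorem forall_fun_fin_succ {n : ℕ} {α : Type*} {P : (Fin (n + 1) → α) → Prop} :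
    (∀ x, P x) ↔ ∀ a x, P (vecCons a x) :=
  Fin.forall_fin_succ_pi

theorem forall_notMem_zero_one_iff {α : Type*} (v w : Fin 3 → α) :
    (∀ l ∉ ({0, 1} : Finset (Fin 3)), v l = w l) ↔ v 2 = w 2 := by
  simp [Fin.forall_fin_succ]

theorem forall_notMem_one_two_iff {α : Type*} (v w : Fin 3 → α) :
    (∀ l ∉ ({1, 2} : Finset (Fin 3)), v l = w l) ↔ v 0 = w 0 := by
  simp [Fin.forall_fin_succ]

variable {q : ℂ}

theorem tlDensityAt_sq_fin_two (hq : q ≠ 0) :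
    tlDensityAt (0 : Fin 2) 1 q * tlDensityAt 0 1 q = (q + q⁻¹) • tlDensityAt (0 : Fin 2) 1 q := by
  ext x y
  simp only [mul_apply, Matrix.smul_apply, tlDensityAt_apply (by decide : (0 : Fin 2) ≠ 1) hq]
  generalize singletKet q (x 0) (x 1) = u, singletBra q (y 0) (y 1) = v
  simp [sum_fun_fin_succ, Fin.sum_univ_two, singletKet, singletBra]
  ring

theorem commute_tlDensityAt_piKron_diagonal (hq : q ≠ 0) (d : Fin 2 → ℂ) :
    Commute (tlDensityAt (0 : Fin 2) 1 q) (piKron fun _ => diagonal d) := by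
  rw [piKron_diagonal]
  change _ * _ = _ * _
  ext x y
  revert x y
  simp only [forall_fun_fin_succ, Fin.forall_fin_zero_pi]
  intro a b c d
  simp only [mul_diagonal, diagonal_mul, tlDensityAt_apply (by decide : (0 : Fin 2) ≠ 1) hq]
  fin_cases a <;> fin_cases b <;> fin_cases c <;> fin_cases d <;>
    simp [Fin.prod_univ_two, singletKet, singletBra] <;> ring

theorem commute_tlDensityAt_coproduct_E (hq : q ≠ 0) :
    Commute (tlDensityAt (0 : Fin 2) 1 q) (piKron ![σp, diagonal (dq q)] + piKron ![1, σp]) := by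
  change _ * _ = _ * _
  ext x y
  revert x y
  simp only [forall_fun_fin_succ, Fin.forall_fin_zero_pi]
  intro a b c d
  simp only [mul_apply, sum_fun_fin_succ, Matrix.add_apply,
    tlDensityAt_apply (by decide : (0 : Fin 2) ≠ 1) hq]
  fin_cases a <;> fin_cases b <;> fin_cases c <;> fin_cases d <;>
    simp [Fin.sum_univ_two, Fin.prod_univ_two, piKron, singletKet, singletBra, σp, σx, σy, dq,
      one_apply] <;> field_simp <;> ring

theorem commute_tlDensityAt_coproduct_F (hq : q ≠ 0) :
    Commute (tlDensityAt (0 : Fin 2) 1 q)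
      (piKron ![σm, 1] + piKron ![diagonal fun t => (dq q t)⁻¹, σm]) := by
  change _ * _ = _ * _
  ext x y
  revert x y
  simp only [forall_fun_fin_succ, Fin.forall_fin_zero_pi]
  intro a b c d
  simp only [mul_apply, sum_fun_fin_succ, Matrix.add_apply,
    tlDensityAt_apply (by decide : (0 : Fin 2) ≠ 1) hq]
  fin_cases a <;> fin_cases b <;> fin_cases c <;> fin_cases d <;>
    simp [Fin.sum_univ_two, Fin.prod_univ_two, piKron, singletKet, singletBra, σm, σx, σy, dq,
      one_apply] <;> field_simp <;> ring

theorem tlDensityAt_mul_mul_fin_three_left (hq : q ≠ 0) :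
    tlDensityAt (0 : Fin 3) 1 q * tlDensityAt 1 2 q * tlDensityAt 0 1 q
      = tlDensityAt (0 : Fin 3) 1 q := by
  ext x y
  simp only [mul_apply, tlDensityAt_apply (by decide : (0 : Fin 3) ≠ 1) hq,
    tlDensityAt_apply (by decide : (1 : Fin 3) ≠ 2) hq, forall_notMem_zero_one_iff,
    forall_notMem_one_two_iff]
  -- only the spectator spins `x 2`, `y 2` need to be split; the singlet factors are atoms
  generalize singletKet q (x 0) (x 1) = u, singletBra q (y 0) (y 1) = v, x 2 = s, y 2 = t
  fin_cases s <;> fin_cases t <;>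
    simp [sum_fun_fin_succ, Fin.sum_univ_two, singletKet, singletBra, hq, mul_assoc]

theorem tlDensityAt_mul_mul_fin_three_right (hq : q ≠ 0) :
    tlDensityAt (1 : Fin 3) 2 q * tlDensityAt 0 1 q * tlDensityAt 1 2 q
      = tlDensityAt (1 : Fin 3) 2 q := by
  ext x y
  simp only [mul_apply, tlDensityAt_apply (by decide : (0 : Fin 3) ≠ 1) hq,
    tlDensityAt_apply (by decide : (1 : Fin 3) ≠ 2) hq, forall_notMem_zero_one_iff,
    forall_notMem_one_two_iff]
  generalize singletKet q (x 1) (x 2) = u, singletBra q (y 1) (y 2) = v, x 0 = s, y 0 = t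
  fin_cases s <;> fin_cases t <;>
    simp [sum_fun_fin_succ, Fin.sum_univ_two, singletKet, singletBra, hq, mul_assoc]

end SmallChains

section Chain

variable {N : ℕ}

def siteBlock (i k : ℕ) (h : i + k ≤ N) : Fin k ↪ Fin N :=
  (Fin.natAddEmb i).trans (Fin.castLEEmb h)

@[simp]
theorem siteBlock_apply_val {i k : ℕ} (h : i + k ≤ N) (x : Fin k) :
    (siteBlock i k h x : ℕ) = i + x := rfl

theorem site_eq_piKron {j : ℕ} (hj : j < N) (M : Matrix (Fin 2) (Fin 2) ℂ) :
    site N j M = piKron (Pi.mulSingle ⟨j, hj⟩ M) := by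
  ext v w
  simp only [site, hj, ↓reduceDIte, piKron_mulSingle_apply]
  convert rfl

theorem eXXZ_eq_tlDensityAt {i : ℕ} (h : i + 1 < N) (q : ℂ) :
    eXXZ N q i = tlDensityAt ⟨i, by omega⟩ ⟨i + 1, h⟩ q := by
  simp only [eXXZ, tlDensityAt, tlDensity, site_eq_piKron (Nat.lt_of_succ_lt h), site_eq_piKron h,
    piKron_mul, Pi.mulSingle_one, mul_one, one_mul]

theorem eXXZ_eq_embed {k i : ℕ} (e : Fin k ↪ Fin N) {a b : Fin k} (ha : (e a : ℕ) = i)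
    (hb : (e b : ℕ) = i + 1) (q : ℂ) : eXXZ N q i = embed ℂ e (tlDensityAt a b q) := by
  rw [embed_tlDensityAt, eXXZ_eq_tlDensityAt (hb ▸ (e b).isLt)]
  congr 1
  exacts [Fin.ext ha.symm, Fin.ext hb.symm]

theorem eXXZ_eq_embed_siteBlock {i : ℕ} (h : i + 1 < N) (q : ℂ) :
    eXXZ N q i = embed ℂ (siteBlock i 2 h) (tlDensityAt 0 1 q) :=
  eXXZ_eq_embed _ (by simp) (by simp) q

def jwString (a b c : Matrix (Fin 2) (Fin 2) ℂ) (j : ℕ) : Fin N → Matrix (Fin 2) (Fin 2) ℂ :=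
  fun l => if (l : ℕ) < j then a else if (l : ℕ) = j then b else c

theorem EXXZ_eq_sum_piKron (q : ℂ) :
    EXXZ N q = ∑ j ∈ Finset.range N, piKron (jwString 1 σp (diagonal (dq q)) j) := by
  refine Finset.sum_congr rfl fun j hj => ?_
  rw [site_eq_piKron (Finset.mem_range.1 hj), diagonal_prod_filter_eq_piKron, piKron_mul]
  congr 1
  funext l
  rcases lt_trichotomy (l : ℕ) j with hlj | hlj | hlj
  · simp [jwString, Fin.ext_iff, hlj, hlj.ne, hlj.not_gt]
  · simp [jwString, Pi.mulSingle_apply, Fin.ext_iff, hlj]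
  · simp [jwString, Fin.ext_iff, hlj, hlj.ne', hlj.not_gt]

theorem FXXZ_eq_sum_piKron (q : ℂ) :
    FXXZ N q = ∑ j ∈ Finset.range N,
      piKron (jwString (diagonal fun t => (dq q t)⁻¹) σm 1 j) := by
  refine Finset.sum_congr rfl fun j hj => ?_
  have hdiag := diagonal_prod_filter_eq_piKron (fun l : Fin N => (l : ℕ) < j)
    fun t => (dq q t)⁻¹
  rw [site_eq_piKron (Finset.mem_range.1 hj), hdiag, piKron_mul]
  congr 1
  funext l
  rcases lt_trichotomy (l : ℕ) j with hlj | hlj | hlj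
  · simp [jwString, Fin.ext_iff, hlj, hlj.ne]
  · simp [jwString, Pi.mulSingle_apply, Fin.ext_iff, hlj]
  · simp [jwString, Fin.ext_iff, hlj.ne', hlj.not_gt]

theorem KXXZ_eq_piKron (q : ℂ) : KXXZ N q = piKron fun _ => diagonal (dq q) :=
  (piKron_diagonal _).symm

theorem commute_embed_sum_jwString {i : ℕ} (h : i + 2 ≤ N)
    {M : Matrix (Fin 2 → Fin 2) (Fin 2 → Fin 2) ℂ} {a b c : Matrix (Fin 2) (Fin 2) ℂ}
    (ha : Commute M (piKron fun _ => a)) (hc : Commute M (piKron fun _ => c))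
    (hb : Commute M (piKron ![b, c] + piKron ![a, b])) :
    Commute (embed ℂ (siteBlock i 2 h) M) (∑ j ∈ Finset.range N, piKron (jwString a b c j)) := by
  have hsub : {i, i + 1} ⊆ Finset.range N := by
    intro j hj
    simp only [Finset.mem_insert, Finset.mem_singleton] at hj
    simp only [Finset.mem_range]
    omega
  rw [← Finset.sum_sdiff hsub, Finset.sum_pair (by omega : i ≠ i + 1)]
  -- the strings with `b` on site `i` or `i + 1` agree off the window; only their sum commutes
  refine (Commute.sum_right _ _ _ fun j hj => commute_embed_piKron _ ?_).add_right
    (commute_embed_piKron_add _ (fun l hl => ?_) ?_)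
  · simp only [Finset.mem_sdiff, Finset.mem_insert, Finset.mem_singleton, not_or] at hj
    rcases Nat.lt_or_gt_of_ne hj.2.1 with hji | hji
    · convert hc using 2
      funext k
      simp [jwString, show ¬ i + k < j by omega, show i + k ≠ j by omega]
    · convert ha using 2
      funext k
      simp [jwString, show i + k < j by omega]
  · have hli : (l : ℕ) ≠ i := fun hli => hl ⟨0, Fin.ext (by simp [hli])⟩
    have hli1 : (l : ℕ) ≠ i + 1 := fun hli1 => hl ⟨1, Fin.ext (by simp [hli1])⟩
    rcases Nat.lt_or_gt_of_ne hli with hlt | hgt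
    · simp [jwString, hlt, show (l : ℕ) < i + 1 by omega]
    · simp [jwString, show ¬ (l : ℕ) < i by omega, show ¬ (l : ℕ) < i + 1 by omega, hli, hli1]
  · convert hb using 3 <;> funext k <;> fin_cases k <;> simp [jwString]

variable {q : ℂ}

theorem eXXZ_sq (hq : q ≠ 0) {i : ℕ} (h : i + 1 < N) :
    eXXZ N q i ^ 2 = (q + q⁻¹) • eXXZ N q i := by
  rw [eXXZ_eq_embed_siteBlock h, sq, ← map_mul,
    tlDensityAt_sq_fin_two hq, map_smul]

theorem eXXZ_mul_eXXZ_succ_mul_eXXZ (hq : q ≠ 0) {i : ℕ} (h : i + 2 < N) :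
    eXXZ N q i * eXXZ N q (i + 1) * eXXZ N q i = eXXZ N q i := by
  rw [eXXZ_eq_embed (siteBlock i 3 h) (i := i) (a := 0) (b := 1) (by simp) (by simp),
    eXXZ_eq_embed (siteBlock i 3 h) (i := i + 1) (a := 1) (b := 2) (by simp) (by simp), ← map_mul,
    ← map_mul, tlDensityAt_mul_mul_fin_three_left hq]

theorem eXXZ_succ_mul_eXXZ_mul_eXXZ_succ (hq : q ≠ 0) {i : ℕ} (h : i + 2 < N) :
    eXXZ N q (i + 1) * eXXZ N q i * eXXZ N q (i + 1) = eXXZ N q (i + 1) := by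
  rw [eXXZ_eq_embed (siteBlock i 3 h) (i := i) (a := 0) (b := 1) (by simp) (by simp),
    eXXZ_eq_embed (siteBlock i 3 h) (i := i + 1) (a := 1) (b := 2) (by simp) (by simp), ← map_mul,
    ← map_mul, tlDensityAt_mul_mul_fin_three_right hq]

theorem commute_eXXZ_of_succ_lt {i j : ℕ} (hij : i + 1 < j) (hj : j + 1 < N) :
    Commute (eXXZ N q i) (eXXZ N q j) := by
  rw [eXXZ_eq_tlDensityAt (by omega), eXXZ_eq_tlDensityAt hj]
  exact commute_tlDensityAt (by simp [Fin.ext_iff]; omega) (by simp [Fin.ext_iff]; omega) q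

theorem commute_eXXZ_EXXZ (hq : q ≠ 0) {i : ℕ} (h : i + 1 < N) :
    Commute (eXXZ N q i) (EXXZ N q) := by
  rw [eXXZ_eq_embed_siteBlock h, EXXZ_eq_sum_piKron]
  refine commute_embed_sum_jwString _ ?_ (commute_tlDensityAt_piKron_diagonal hq _)
    (commute_tlDensityAt_coproduct_E hq)
  rw [show (fun _ => 1 : Fin 2 → Matrix (Fin 2) (Fin 2) ℂ) = 1 from rfl, piKron_one]
  exact Commute.one_right _

theorem commute_eXXZ_FXXZ (hq : q ≠ 0) {i : ℕ} (h : i + 1 < N) :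
    Commute (eXXZ N q i) (FXXZ N q) := by
  rw [eXXZ_eq_embed_siteBlock h, FXXZ_eq_sum_piKron]
  refine commute_embed_sum_jwString _ (commute_tlDensityAt_piKron_diagonal hq _) ?_
    (commute_tlDensityAt_coproduct_F hq)
  rw [show (fun _ => 1 : Fin 2 → Matrix (Fin 2) (Fin 2) ℂ) = 1 from rfl, piKron_one]
  exact Commute.one_right _

theorem commute_eXXZ_KXXZ (hq : q ≠ 0) {i : ℕ} (h : i + 1 < N) :
    Commute (eXXZ N q i) (KXXZ N q) := by
  rw [eXXZ_eq_embed_siteBlock h, KXXZ_eq_piKron]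
  exact commute_embed_piKron _ (commute_tlDensityAt_piKron_diagonal hq _)

theorem HXXZ_eq_neg_sum_eXXZ_add (hN : 1 ≤ N) (q : ℂ) :
    HXXZ N q = -(∑ i ∈ Finset.range (N - 1), eXXZ N q i)
      + (((N : ℂ) - 1) * ((q + q⁻¹)/4)) • (1 : Op N) := by
  have htel : ∑ i ∈ Finset.range (N - 1), site N i σz
      - ∑ i ∈ Finset.range (N - 1), site N (i + 1) σz = site N 0 σz - site N (N - 1) σz := by
    rw [← Finset.sum_sub_distrib, Finset.sum_range_sub' (fun k => site N k σz) (N - 1)]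
  have hcast : (((N - 1 : ℕ) : ℂ)) = (N : ℂ) - 1 := by
    rw [Nat.cast_sub hN, Nat.cast_one]
  rw [HXXZ]
  simp only [eXXZ, Finset.sum_add_distrib, Finset.sum_sub_distrib, ← Finset.smul_sum,
    Finset.sum_const, Finset.card_range, htel, ← Nat.cast_smul_eq_nsmul ℂ, hcast]
  module

end Chain

end LatticeW

/-- XXZ Temperley–Lieb densities: TL relations, relation to the Hamiltonian,
and quantum-group symmetry. -/
theorem LatticeW.xxz_TL (N : ℕ) (hN : 3 ≤ N) (q : ℂ) (hq : q ≠ 0) :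
    (∀ i, i < N - 1 → eXXZ N q i ^ 2 = (q + q⁻¹) • eXXZ N q i) ∧
    (∀ i, i + 1 < N - 1 →
      eXXZ N q i * eXXZ N q (i+1) * eXXZ N q i = eXXZ N q i ∧
      eXXZ N q (i+1) * eXXZ N q i * eXXZ N q (i+1) = eXXZ N q (i+1)) ∧
    (∀ i j, i < N - 1 → j < N - 1 → 1 < Nat.dist i j →
      eXXZ N q i * eXXZ N q j = eXXZ N q j * eXXZ N q i) ∧
    (HXXZ N q
      = -(∑ i ∈ Finset.range (N - 1), eXXZ N q i)
        + (((N : ℂ) - 1) * ((q + q⁻¹)/4)) • (1 : Op N)) ∧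
    (∀ i, i < N - 1 →
      eXXZ N q i * EXXZ N q = EXXZ N q * eXXZ N q i ∧
      eXXZ N q i * FXXZ N q = FXXZ N q * eXXZ N q i ∧
      eXXZ N q i * KXXZ N q = KXXZ N q * eXXZ N q i) := by
  refine ⟨fun i hi => eXXZ_sq hq (by omega), fun i hi => ?_, fun i j hi hj hij => ?_,
    HXXZ_eq_neg_sum_eXXZ_add (by omega) q, fun i hi => ?_⟩
  · exact ⟨eXXZ_mul_eXXZ_succ_mul_eXXZ hq (by omega),
      eXXZ_succ_mul_eXXZ_mul_eXXZ_succ hq (by omega)⟩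
  · have hfar : i + 1 < j ∨ j + 1 < i := by
      simp only [Nat.dist] at hij
      omega
    rcases hfar with hfar | hfar
    · exact (commute_eXXZ_of_succ_lt hfar (by omega)).eq
    · exact (commute_eXXZ_of_succ_lt hfar (by omega)).symm.eq
  · exact ⟨(commute_eXXZ_EXXZ hq (by omega)).eq, (commute_eXXZ_FXXZ hq (by omega)).eq,
      (commute_eXXZ_KXXZ hq (by omega)).eq⟩
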